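/- arXiv:2506.01098 — 4 statements merged into one kernel-verified Lean document; each statement's English description precedes it below -/
import Mathlib

section
/- Let κ be a Markov kernel on a measurable space Θ, let A ⊆ Θ be measurable, and suppose there is ρ ∈ (0, 1] such that κ(θ, A) ≥ ρ for every θ ∈ Θ. Let P_θ denote the trajectory measure on Θ^ℕ of the Markov chain with transition kernel κ started at θ (Ionescu–Tulcea construction). Then for every initial point θ, P_θ({ω : the set {n ∈ ℕ : ω_n ∈ A} is infinite}) = 1; that is, the chain visits A infinitely often almost surely from every starting point (the set A is Harris recurrent). -/
/-!
Let `ε > 0` bound `κ x A` from below uniformly. By the Markov recursion, each further step spent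
outside `A` multiplies the probability of staying outside by at most `1 - ε`, so the chain avoids
`A` at all times after `m` with probability at most `(1 - ε) ^ N` for every `N`, i.e. with
probability zero. A countable union over `m` of these null events leaves the event that `A` is
visited after every time, which is the event that `A` is visited infinitely often.
-/

open MeasureTheory ProbabilityTheory

/-- `IsTrajectoryMeasure κ P` says that `P θ` is the law on the sequence space `ℕ → Θ` of
the Markov chain with transition kernel `κ` started at `θ` (the measure produced by the
Ionescu–Tulcea construction): each `P θ` is a probability measure, the chain starts at `θ`
almost surely, and the finite-dimensional distributions satisfy the Markov recursion
`P θ {ω | ∀ k ≤ n+1, ω k ∈ B k} = ∫_{ {ω | ∀ k ≤ n, ω k ∈ B k} } κ (ω n) (B (n+1)) ∂(P θ)`. -/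
structure IsTrajectoryMeasure {Θ : Type*} [MeasurableSpace Θ]
    (κ : ProbabilityTheory.Kernel Θ Θ) (P : Θ → Measure (ℕ → Θ)) : Prop where
  isProb : ∀ θ, IsProbabilityMeasure (P θ)
  start : ∀ θ, P θ {ω | ω 0 = θ} = 1
  markov : ∀ (θ : Θ) (n : ℕ) (B : ℕ → Set Θ), (∀ k, MeasurableSet (B k)) →
    P θ {ω | ∀ k ≤ n + 1, ω k ∈ B k}
      = ∫⁻ ω in {ω | ∀ k ≤ n, ω k ∈ B k}, κ (ω n) (B (n + 1)) ∂(P θ)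

namespace IsTrajectoryMeasure

variable {Θ : Type*} [MeasurableSpace Θ] {κ : Kernel Θ Θ} {P : Θ → Measure (ℕ → Θ)}

lemma measure_forall_le_succ_le (hP : IsTrajectoryMeasure κ P) (θ : Θ) (n : ℕ)
    {B : ℕ → Set Θ} (hB : ∀ k, MeasurableSet (B k)) {c : ENNReal}
    (hc : ∀ x, κ x (B (n + 1)) ≤ c) :
    P θ {ω | ∀ k ≤ n + 1, ω k ∈ B k} ≤ c * P θ {ω | ∀ k ≤ n, ω k ∈ B k} :=
  calc P θ {ω | ∀ k ≤ n + 1, ω k ∈ B k}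
      = ∫⁻ ω in {ω | ∀ k ≤ n, ω k ∈ B k}, κ (ω n) (B (n + 1)) ∂(P θ) := hP.markov θ n B hB
    _ ≤ ∫⁻ _ in {ω | ∀ k ≤ n, ω k ∈ B k}, c ∂(P θ) := lintegral_mono fun ω => hc (ω n)
    _ = c * P θ {ω | ∀ k ≤ n, ω k ∈ B k} := setLIntegral_const _ _

lemma measure_forall_mem_after_le_pow (hP : IsTrajectoryMeasure κ P) (θ : Θ)
    {C : Set Θ} (hC : MeasurableSet C) {c : ENNReal} (hc : ∀ x, κ x C ≤ c) (m N : ℕ) :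
    P θ {ω | ∀ k, m < k → ω k ∈ C} ≤ c ^ N := by
  have := hP.isProb θ
  let B : ℕ → Set Θ := fun k => {x | m < k → x ∈ C}
  have hB : ∀ k, MeasurableSet (B k) := fun k => by
    by_cases hk : m < k <;> simp [B, hk, hC]
  have hBC : ∀ n, B (m + n + 1) = C := fun n => by
    ext x; simp [B, Nat.lt_succ_of_le (Nat.le_add_right m n)]
  suffices key : ∀ N, P θ {ω | ∀ k ≤ m + N, ω k ∈ B k} ≤ c ^ N by
    refine (measure_mono ?_).trans (key N)
    exact fun ω hω k _ => hω k
  intro N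
  induction N with
  | zero => simpa using prob_le_one
  | succ N ih =>
    calc P θ {ω | ∀ k ≤ m + N + 1, ω k ∈ B k}
        ≤ c * P θ {ω | ∀ k ≤ m + N, ω k ∈ B k} :=
          hP.measure_forall_le_succ_le θ (m + N) hB fun x => (hBC N).symm ▸ hc x
      _ ≤ c * c ^ N := mul_le_mul_right ih c
      _ = c ^ (N + 1) := (pow_succ' c N).symm

lemma measure_forall_mem_after_eq_zero (hP : IsTrajectoryMeasure κ P) (θ : Θ)
    {C : Set Θ} (hC : MeasurableSet C) {c : ENNReal} (hc : ∀ x, κ x C ≤ c) (hc1 : c < 1)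
    (m : ℕ) : P θ {ω | ∀ k, m < k → ω k ∈ C} = 0 :=
  le_antisymm (ge_of_tendsto' (ENNReal.tendsto_pow_atTop_nhds_zero_of_lt_one hc1)
    (hP.measure_forall_mem_after_le_pow θ hC hc m)) bot_le

lemma measure_setOf_infinite_eq_one [IsMarkovKernel κ] (hP : IsTrajectoryMeasure κ P)
    {A : Set Θ} (hA : MeasurableSet A) {ε : ENNReal} (hε : 0 < ε) (hmin : ∀ x, ε ≤ κ x A)
    (θ : Θ) : P θ {ω | {n : ℕ | ω n ∈ A}.Infinite} = 1 := by
  have := hP.isProb θ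
  have hcompl : ∀ x, κ x Aᶜ ≤ 1 - ε := fun x => by
    rw [prob_compl_eq_one_sub hA]; exact tsub_le_tsub_left (hmin x) 1
  have hvisit : ∀ᵐ ω ∂(P θ), ∀ m, ∃ n ∈ {n : ℕ | ω n ∈ A}, m < n :=
    ae_all_iff.2 fun m => measure_mono_null (fun ω hω k hk hkA => hω ⟨k, hkA, hk⟩)
      (hP.measure_forall_mem_after_eq_zero θ hA.compl hcompl
        (ENNReal.sub_lt_self ENNReal.one_ne_top one_ne_zero hε.ne') m)
  have hinf : ∀ᵐ ω ∂(P θ), ω ∈ {ω | {n : ℕ | ω n ∈ A}.Infinite} :=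
    hvisit.mono fun ω => Set.infinite_of_forall_exists_gt
  exact (measure_congr (ae_eq_univ.2 hinf)).trans measure_univ

end IsTrajectoryMeasure

theorem visits_infinitely_often_of_minorization_general
    {Θ : Type*} [MeasurableSpace Θ]
    (κ : ProbabilityTheory.Kernel Θ Θ) [IsMarkovKernel κ]
    (A : Set Θ) (hA : MeasurableSet A)
    (ρ : ℝ) (hρpos : 0 < ρ)
    (hmin : ∀ θ : Θ, ENNReal.ofReal ρ ≤ κ θ A)
    (P : Θ → Measure (ℕ → Θ)) (hP : IsTrajectoryMeasure κ P) :
    ∀ θ : Θ, P θ {ω | {n : ℕ | ω n ∈ A}.Infinite} = 1 :=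
  hP.measure_setOf_infinite_eq_one hA (ENNReal.ofReal_pos.2 hρpos) hmin

/-- **Harris recurrence (conclusion of the paper's Recurrence Lemma).**  If a Markov
kernel `κ` on `Θ` satisfies the uniform minorization `κ θ A ≥ ρ` for every `θ`, with
`ρ ∈ (0,1]`, then under the trajectory measure `P θ` of the chain started at any `θ`,
the chain visits the set `A` infinitely often almost surely: the set of times `n` with
`ω n ∈ A` is infinite with `P θ`-probability one. -/
theorem visits_infinitely_often_of_minorization
    {Θ : Type*} [MeasurableSpace Θ]
    (κ : ProbabilityTheory.Kernel Θ Θ) [IsMarkovKernel κ]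
    (A : Set Θ) (hA : MeasurableSet A)
    (ρ : ℝ) (hρpos : 0 < ρ) (hρle : ρ ≤ 1)
    (hmin : ∀ θ : Θ, ENNReal.ofReal ρ ≤ κ θ A)
    (P : Θ → Measure (ℕ → Θ)) (hP : IsTrajectoryMeasure κ P) :
    ∀ θ : Θ, P θ {ω | {n : ℕ | ω n ∈ A}.Infinite} = 1 :=
  visits_infinitely_often_of_minorization_general κ A hA ρ hρpos hmin P hP
end

section
/- Let κ be a Markov kernel on a measurable space Θ and let μ be a measure on Θ such that κ(θ, B) > 0 for every θ ∈ Θ and every measurable B with μ(B) > 0. Then there do not exist an integer d ≥ 2 and pairwise disjoint measurable sets D₀, …, D_{d−1} ⊆ Θ with μ(D_i) > 0 for every i and κ(θ, D_{(i+1) mod d}) = 1 for every i and every θ ∈ D_i. In other words, such a chain admits no d-cycle with d ≥ 2 and is aperiodic. -/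
open MeasureTheory ProbabilityTheory

lemma measure_eq_zero_of_disjoint_of_measure_eq_one {α : Type*} [MeasurableSpace α]
    {ν : Measure α} [IsProbabilityMeasure ν] {s t : Set α} (hs : NullMeasurableSet s ν)
    (hνs : ν s = 1) (hst : Disjoint s t) : ν t = 0 :=
  measure_mono_null (Set.subset_compl_iff_disjoint_left.mpr hst)
    ((prob_compl_eq_zero_iff₀ hs).mpr hνs)

lemma Kernel.apply_cycle_self_eq_zero {Θ : Type*} [MeasurableSpace Θ]
    {κ : Kernel Θ Θ} [IsMarkovKernel κ] {d : ℕ} (hd : 2 ≤ d) {D : ZMod d → Set Θ}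
    (hmeas : ∀ i, MeasurableSet (D i)) (hdisj : Pairwise (Function.onFun Disjoint D))
    (hcyc : ∀ (i : ZMod d), ∀ θ ∈ D i, κ θ (D (i + 1)) = 1) {i : ZMod d} {θ : Θ}
    (hθ : θ ∈ D i) : κ θ (D i) = 0 := by
  have : Fact (1 < d) := ⟨hd⟩
  have hsucc_ne : i + 1 ≠ i := by simp
  exact measure_eq_zero_of_disjoint_of_measure_eq_one (hmeas _).nullMeasurableSet (hcyc i θ hθ)
    (hdisj hsucc_ne)

/-- **Aperiodicity (paper's Aperiodicity Lemma, general form).**  Let `κ` be a Markov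
kernel on `Θ` and `μ` a measure on `Θ` such that `κ θ B > 0` for every `θ` and every
measurable `B` with `μ B > 0`.  Then there is no `d`-cycle with `d ≥ 2`: there do not
exist pairwise disjoint measurable sets `D 0, …, D (d-1)`, each of positive `μ`-measure,
such that from every point of `D i` the chain moves into `D ((i+1) mod d)` with
probability one.  Hence the chain is aperiodic. -/
theorem no_cycle_of_positive_kernel
    {Θ : Type*} [MeasurableSpace Θ]
    (κ : ProbabilityTheory.Kernel Θ Θ) [IsMarkovKernel κ]
    (μ : Measure Θ)
    (hpos : ∀ (θ : Θ) (B : Set Θ), MeasurableSet B → 0 < μ B → 0 < κ θ B) :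
    ¬ ∃ (d : ℕ), 2 ≤ d ∧ ∃ D : ZMod d → Set Θ,
        (∀ i, MeasurableSet (D i)) ∧
        (Pairwise (Function.onFun Disjoint D)) ∧
        (∀ i, 0 < μ (D i)) ∧
        (∀ (i : ZMod d), ∀ θ ∈ D i, κ θ (D (i + 1)) = 1) := by
  rintro ⟨d, hd, D, hmeas, hdisj, hμ, hcyc⟩
  obtain ⟨θ, hθ⟩ := nonempty_of_measure_ne_zero (hμ 0).ne'
  exact (hpos θ (D 0) (hmeas 0) (hμ 0)).ne'
    (Kernel.apply_cycle_self_eq_zero hd hmeas hdisj hcyc hθ)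
end

section
/- Let Θ and X be measurable spaces, h : Θ → X a measurable map, and κ : X → Θ a Markov kernel. Define the Markov kernel K on Θ by K(θ, ·) = κ(h(θ), ·). Suppose ν is a finite measure on X that is invariant for the induced marginal chain, i.e., the pushforward under h of the measure ν.bind κ (given by (ν.bind κ)(B) = ∫ κ(x, B) ν(dx)) equals ν. Then the measure π := ν.bind κ on Θ is invariant for K, that is, π.bind K = π (equivalently ∫ K(θ, B) π(dθ) = π(B) for every measurable B), and π is finite with total mass π(Θ) = ν(X). -/
open MeasureTheory ProbabilityTheory

namespace MeasureTheory.Measure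

variable {α β γ : Type*} [MeasurableSpace α] [MeasurableSpace β] [MeasurableSpace γ]

lemma comap_comp_eq_comp_map (μ : Measure β) (κ : Kernel α γ) {f : β → α} (hf : Measurable f) :
    κ.comap f hf ∘ₘ μ = κ ∘ₘ μ.map f := by
  ext s hs
  rw [bind_apply hs (Kernel.aemeasurable _), bind_apply hs κ.aemeasurable,
    lintegral_map (κ.measurable_coe hs) hf]
  rfl

end MeasureTheory.Measure

/-- **Invariant finite measure (paper's Lemma S.6).**  Let `h : Θ → X` be measurable and
`κ : X → Θ` a Markov kernel, and let `K` be the Markov kernel on `Θ` given by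
`K θ = κ (h θ)` (the ProjMC² kernel depends on the state only through its
projected-factor component).  If `ν` is a finite measure on `X` that is invariant for the
induced marginal chain, i.e. `(ν.bind κ).map h = ν`, then `π := ν.bind κ` is invariant
for `K` (`π.bind K = π`), and `π` is a finite measure with total mass
`π Θ = ν X`. -/
theorem invariant_measure_of_marginal_invariant
    {Θ X : Type*} [MeasurableSpace Θ] [MeasurableSpace X]
    (h : Θ → X) (hh : Measurable h)
    (κ : ProbabilityTheory.Kernel X Θ) [IsMarkovKernel κ]
    (K : Θ → Measure Θ) (hK : ∀ θ, K θ = κ (h θ))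
    (ν : Measure X) [IsFiniteMeasure ν]
    (hinv : (ν.bind (fun x => κ x)).map h = ν) :
    (ν.bind (fun x => κ x)).bind K = ν.bind (fun x => κ x) ∧
    IsFiniteMeasure (ν.bind (fun x => κ x)) ∧
    (ν.bind (fun x => κ x)) Set.univ = ν Set.univ := by
  obtain rfl : K = κ.comap h hh := funext hK
  exact ⟨by rw [Measure.comap_comp_eq_comp_map, hinv], inferInstance, Measure.comp_apply_univ⟩
end

section
/- Let κ be a Markov kernel on a measurable space Θ satisfying the Doeblin minorization condition: there exist ε ∈ (0, 1] and a probability measure ν on Θ such that κ(θ, A) ≥ ε · ν(A) for every θ ∈ Θ and every measurable A. Then κ admits a unique invariant probability measure π (π.bind κ = π), and for every θ ∈ Θ, every measurable A, and every n ≥ 1, |κ^{∘n}(θ, A) − π(A)| ≤ (1 − ε)^n, where κ^{∘n} denotes the n-fold composition of κ. In particular the n-step distributions converge to π in total variation, uniformly in the initial point. -/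
open MeasureTheory ProbabilityTheory
open scoped ENNReal

/-- The `n`-fold composition of a kernel with itself: `kernelIterate κ 0 = Kernel.id`
and `kernelIterate κ (n+1) = κ ∘ₖ kernelIterate κ n`, so that
`kernelIterate κ (n+1) θ B = ∫ κ θ' B ∂(kernelIterate κ n θ)`. -/
noncomputable def kernelIterate {Θ : Type*} [MeasurableSpace Θ]
    (κ : ProbabilityTheory.Kernel Θ Θ) : ℕ → ProbabilityTheory.Kernel Θ Θ
  | 0 => ProbabilityTheory.Kernel.id
  | n + 1 => κ ∘ₖ kernelIterate κ n

/-!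
Write `e • ν ≤ κ θ` for the Doeblin minorization. Every one-step law `κ ∘ₘ μ` then splits as a
regeneration part `(μ univ * e) • ν`, which does not depend on where the mass of `μ` sits, plus a
residual of mass `μ univ * (1 - e)`. Two laws of equal mass have the same regeneration part, so
after `n` steps they differ only through residuals of mass `(1 - e) ^ n`; this gives the geometric
bound and uniqueness. Iterating the residual map `R` from `ν` itself produces the invariant law
`π = e • ∑ₖ Rᵏ ν`.
-/

lemma ENNReal.abs_toReal_sub_le {a b : ℝ≥0∞} {r : ℝ} (ha : a ≠ ∞) (hb : b ≠ ∞) (hr : 0 ≤ r)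
    (hab : a ≤ b + ENNReal.ofReal r) (hba : b ≤ a + ENNReal.ofReal r) :
    |a.toReal - b.toReal| ≤ r := by
  have key : ∀ {x y : ℝ≥0∞}, y ≠ ∞ → x ≤ y + ENNReal.ofReal r → x.toReal - y.toReal ≤ r := by
    intro x y hy hxy
    have := ENNReal.toReal_mono (ENNReal.add_ne_top.2 ⟨hy, ENNReal.ofReal_ne_top⟩) hxy
    rw [ENNReal.toReal_add hy ENNReal.ofReal_ne_top, ENNReal.toReal_ofReal hr] at this
    linarith
  exact abs_sub_le_iff.2 ⟨key hb hab, key ha hba⟩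

lemma kernelIterate_apply {Θ : Type*} [MeasurableSpace Θ] (κ : Kernel Θ Θ) (n : ℕ) (θ : Θ) :
    kernelIterate κ n θ = (κ ∘ₘ ·)^[n] (Measure.dirac θ) := by
  induction n with
  | zero => exact Kernel.id_apply θ
  | succ n ih => rw [kernelIterate, Kernel.comp_apply, ih, Function.iterate_succ_apply']

namespace ProbabilityTheory.Kernel

variable {Θ : Type*} [MeasurableSpace Θ] {κ : Kernel Θ Θ} {e : ℝ≥0∞} {ν : Measure Θ}

lemma iterate_comp_add (κ : Kernel Θ Θ) (n : ℕ) (μ₁ μ₂ : Measure Θ) :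
    (κ ∘ₘ ·)^[n] (μ₁ + μ₂) = (κ ∘ₘ ·)^[n] μ₁ + (κ ∘ₘ ·)^[n] μ₂ := by
  induction n generalizing μ₁ μ₂ with
  | zero => rfl
  | succ n ih => simp only [Function.iterate_succ_apply, Measure.comp_add, ih]

lemma smul_le_comp_of_forall_smul_le (hmin : ∀ θ, e • ν ≤ κ θ) (μ : Measure Θ) :
    (μ Set.univ * e) • ν ≤ κ ∘ₘ μ := by
  refine Measure.le_iff.2 fun s hs => ?_
  rw [Measure.bind_apply hs κ.aemeasurable, Measure.smul_apply, smul_eq_mul, mul_assoc,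
    mul_comm, ← MeasureTheory.lintegral_const]
  exact lintegral_mono fun θ => (Measure.smul_apply e ν s).symm.trans_le (hmin θ s)

noncomputable def minorizationResidual (κ : Kernel Θ Θ) (e : ℝ≥0∞) (ν μ : Measure Θ) :
    Measure Θ :=
  κ ∘ₘ μ - (μ Set.univ * e) • ν

instance [IsFiniteKernel κ] {μ : Measure Θ} [IsFiniteMeasure μ] :
    IsFiniteMeasure (minorizationResidual κ e ν μ) :=
  isFiniteMeasure_of_le _ Measure.sub_le

lemma minorizationResidual_add_smul [IsFiniteMeasure ν] (hmin : ∀ θ, e • ν ≤ κ θ)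
    (he : e ≠ ∞) (μ : Measure Θ) [IsFiniteMeasure μ] :
    minorizationResidual κ e ν μ + (μ Set.univ * e) • ν = κ ∘ₘ μ := by
  have : IsFiniteMeasure ((μ Set.univ * e) • ν) :=
    Measure.smul_finite ν (ENNReal.mul_ne_top (measure_ne_top μ _) he)
  exact Measure.sub_add_cancel_of_le (smul_le_comp_of_forall_smul_le hmin μ)

lemma minorizationResidual_apply_univ [IsMarkovKernel κ] [IsProbabilityMeasure ν]
    (hmin : ∀ θ, e • ν ≤ κ θ) (he : e ≠ ∞) (μ : Measure Θ) [IsFiniteMeasure μ] :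
    minorizationResidual κ e ν μ Set.univ = μ Set.univ * (1 - e) := by
  have hmass := congrArg (· Set.univ) (minorizationResidual_add_smul hmin he μ)
  simp only [Measure.add_apply, Measure.smul_apply, measure_univ, smul_eq_mul, mul_one,
    Measure.comp_apply_univ] at hmass
  rw [ENNReal.mul_sub fun _ _ => measure_ne_top μ _, mul_one,
    ENNReal.eq_sub_of_add_eq (ENNReal.mul_ne_top (measure_ne_top μ _) he) hmass]

theorem iterate_comp_apply_le_add [IsMarkovKernel κ] [IsProbabilityMeasure ν]
    (hmin : ∀ θ, e • ν ≤ κ θ) (he : e ≠ ∞) (n : ℕ) {μ₁ μ₂ : Measure Θ}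
    [IsFiniteMeasure μ₁] [IsFiniteMeasure μ₂] (hmass : μ₁ Set.univ = μ₂ Set.univ) (A : Set Θ) :
    (κ ∘ₘ ·)^[n] μ₁ A ≤ (κ ∘ₘ ·)^[n] μ₂ A + μ₁ Set.univ * (1 - e) ^ n := by
  induction n generalizing μ₁ μ₂ with
  | zero =>
    calc μ₁ A ≤ μ₁ Set.univ := measure_mono (Set.subset_univ A)
      _ ≤ μ₂ A + μ₁ Set.univ * (1 - e) ^ 0 := by rw [pow_zero, mul_one]; exact le_add_self
  | succ n ih =>
    have hsplit : ∀ (μ : Measure Θ) [IsFiniteMeasure μ], (κ ∘ₘ ·)^[n + 1] μ =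
        (κ ∘ₘ ·)^[n] (minorizationResidual κ e ν μ) + (κ ∘ₘ ·)^[n] ((μ Set.univ * e) • ν) := by
      intro μ _
      rw [Function.iterate_succ_apply, ← minorizationResidual_add_smul hmin he μ,
        iterate_comp_add]
    have hres := ih (μ₁ := minorizationResidual κ e ν μ₁) (μ₂ := minorizationResidual κ e ν μ₂)
      (by rw [minorizationResidual_apply_univ hmin he, minorizationResidual_apply_univ hmin he,
        hmass])
    rw [minorizationResidual_apply_univ hmin he] at hres
    rw [hsplit μ₁, hsplit μ₂, Measure.add_apply, Measure.add_apply, ← hmass]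
    calc _ ≤ (κ ∘ₘ ·)^[n] (minorizationResidual κ e ν μ₂) A
          + μ₁ Set.univ * (1 - e) * (1 - e) ^ n
          + (κ ∘ₘ ·)^[n] ((μ₁ Set.univ * e) • ν) A := add_le_add_left hres _
      _ = _ := by ring

lemma isProbabilityMeasure_iterate_comp [IsMarkovKernel κ] (n : ℕ) (μ : Measure Θ)
    [IsProbabilityMeasure μ] : IsProbabilityMeasure ((κ ∘ₘ ·)^[n] μ) := by
  induction n with
  | zero => assumption
  | succ n ih => rw [Function.iterate_succ_apply']; infer_instance

theorem abs_toReal_iterate_comp_sub_le [IsMarkovKernel κ] [IsProbabilityMeasure ν] {ε : ℝ}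
    (hε0 : 0 ≤ ε) (hε1 : ε ≤ 1) (hmin : ∀ θ, ENNReal.ofReal ε • ν ≤ κ θ) (n : ℕ)
    (μ₁ μ₂ : Measure Θ) [IsProbabilityMeasure μ₁] [IsProbabilityMeasure μ₂] (A : Set Θ) :
    |((κ ∘ₘ ·)^[n] μ₁ A).toReal - ((κ ∘ₘ ·)^[n] μ₂ A).toReal| ≤ (1 - ε) ^ n := by
  have hpow : (1 - ENNReal.ofReal ε) ^ n = ENNReal.ofReal ((1 - ε) ^ n) := by
    rw [ENNReal.ofReal_pow (by linarith), ENNReal.ofReal_sub _ hε0, ENNReal.ofReal_one]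
  have hbound : ∀ (μ μ' : Measure Θ) [IsProbabilityMeasure μ] [IsProbabilityMeasure μ'],
      (κ ∘ₘ ·)^[n] μ A ≤ (κ ∘ₘ ·)^[n] μ' A + ENNReal.ofReal ((1 - ε) ^ n) := by
    intro μ μ' _ _
    simpa [hpow] using
      iterate_comp_apply_le_add hmin ENNReal.ofReal_ne_top n (μ₁ := μ) (μ₂ := μ') (by simp) A
  have := isProbabilityMeasure_iterate_comp (κ := κ) n μ₁
  have := isProbabilityMeasure_iterate_comp (κ := κ) n μ₂
  exact ENNReal.abs_toReal_sub_le (measure_ne_top _ _) (measure_ne_top _ _)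
    (pow_nonneg (by linarith) n) (hbound μ₁ μ₂) (hbound μ₂ μ₁)

theorem eq_of_comp_eq_self [IsMarkovKernel κ] [IsProbabilityMeasure ν]
    (hmin : ∀ θ, e • ν ≤ κ θ) (he0 : e ≠ 0) (he : e ≠ ∞) {μ₁ μ₂ : Measure Θ}
    [IsProbabilityMeasure μ₁] [IsProbabilityMeasure μ₂] (h₁ : κ ∘ₘ μ₁ = μ₁)
    (h₂ : κ ∘ₘ μ₂ = μ₂) : μ₁ = μ₂ := by
  have hle : ∀ (μ μ' : Measure Θ) [IsProbabilityMeasure μ] [IsProbabilityMeasure μ'],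
      κ ∘ₘ μ = μ → κ ∘ₘ μ' = μ' → ∀ A, μ A ≤ μ' A := by
    intro μ μ' _ _ h h' A
    have hlim : Filter.Tendsto (fun n : ℕ => μ' A + (1 - e) ^ n) Filter.atTop (nhds (μ' A)) := by
      simpa using tendsto_const_nhds.add (ENNReal.tendsto_pow_atTop_nhds_zero_iff.2
        (ENNReal.sub_lt_self ENNReal.one_ne_top one_ne_zero he0))
    refine ge_of_tendsto' hlim fun n => ?_
    simpa [Function.iterate_fixed (f := (κ ∘ₘ ·)) h, Function.iterate_fixed (f := (κ ∘ₘ ·)) h']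
      using iterate_comp_apply_le_add hmin he n (μ₁ := μ) (μ₂ := μ') (by simp) A
  ext A
  exact le_antisymm (hle μ₁ μ₂ h₁ h₂ A) (hle μ₂ μ₁ h₂ h₁ A)

lemma isFiniteMeasure_minorizationResidual_iterate [IsFiniteKernel κ] [IsFiniteMeasure ν]
    (k : ℕ) : IsFiniteMeasure ((minorizationResidual κ e ν)^[k] ν) := by
  induction k with
  | zero => assumption
  | succ k ih => rw [Function.iterate_succ_apply']; infer_instance

lemma minorizationResidual_iterate_apply_univ [IsMarkovKernel κ] [IsProbabilityMeasure ν]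
    (hmin : ∀ θ, e • ν ≤ κ θ) (he : e ≠ ∞) (k : ℕ) :
    (minorizationResidual κ e ν)^[k] ν Set.univ = (1 - e) ^ k := by
  induction k with
  | zero => simp
  | succ k ih =>
    have := isFiniteMeasure_minorizationResidual_iterate (κ := κ) (e := e) (ν := ν) k
    rw [Function.iterate_succ_apply', minorizationResidual_apply_univ hmin he, ih, pow_succ]

/-- Nummelin's splitting formula `π = ∑ₖ e (1 - e)ᵏ ν Qᵏ`, with `Q` the residual kernel
normalized to mass one. -/
noncomputable def regenerationMeasure (κ : Kernel Θ Θ) (e : ℝ≥0∞) (ν : Measure Θ) : Measure Θ :=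
  e • Measure.sum fun k => (minorizationResidual κ e ν)^[k] ν

lemma isProbabilityMeasure_regenerationMeasure [IsMarkovKernel κ] [IsProbabilityMeasure ν]
    (hmin : ∀ θ, e • ν ≤ κ θ) (he0 : e ≠ 0) (he1 : e ≤ 1) :
    IsProbabilityMeasure (regenerationMeasure κ e ν) := by
  have he : e ≠ ∞ := ne_top_of_le_ne_top ENNReal.one_ne_top he1
  constructor
  rw [regenerationMeasure, Measure.smul_apply, Measure.sum_apply _ MeasurableSet.univ,
    tsum_congr (minorizationResidual_iterate_apply_univ hmin he), ENNReal.tsum_geometric,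
    ENNReal.sub_sub_cancel ENNReal.one_ne_top he1, smul_eq_mul, ENNReal.mul_inv_cancel he0 he]

theorem comp_regenerationMeasure [IsMarkovKernel κ] [IsProbabilityMeasure ν]
    (hmin : ∀ θ, e • ν ≤ κ θ) (he0 : e ≠ 0) (he1 : e ≤ 1) :
    κ ∘ₘ regenerationMeasure κ e ν = regenerationMeasure κ e ν := by
  have he : e ≠ ∞ := ne_top_of_le_ne_top ENNReal.one_ne_top he1
  set a := fun k => (minorizationResidual κ e ν)^[k] ν
  have hstep : ∀ k A, (κ ∘ₘ a k) A = a (k + 1) A + (1 - e) ^ k * e * ν A := by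
    intro k A
    have := isFiniteMeasure_minorizationResidual_iterate (κ := κ) (e := e) (ν := ν) k
    rw [← minorizationResidual_add_smul hmin he (a k), Measure.add_apply, Measure.smul_apply,
      minorizationResidual_iterate_apply_univ hmin he k, smul_eq_mul,
      ← Function.iterate_succ_apply' (minorizationResidual κ e ν)]
  rw [regenerationMeasure, Measure.comp_smul]
  congr 1
  ext A hA
  rw [Measure.bind_sum _ _ κ.aemeasurable, Measure.sum_apply _ hA, Measure.sum_apply _ hA]
  calc ∑' k, (κ ∘ₘ a k) A = ∑' k, (a (k + 1) A + (1 - e) ^ k * e * ν A) := tsum_congr (hstep · A)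
    _ = ∑' k, a (k + 1) A + (∑' k : ℕ, (1 - e) ^ k) * e * ν A := by
      rw [ENNReal.tsum_add, ENNReal.tsum_mul_right, ENNReal.tsum_mul_right]
    _ = ∑' k, a (k + 1) A + ν A := by
      rw [ENNReal.tsum_geometric, ENNReal.sub_sub_cancel ENNReal.one_ne_top he1,
        ENNReal.inv_mul_cancel he0 he, one_mul]
    _ = ∑' k, a k A := by
      rw [add_comm]
      exact (tsum_eq_zero_add' (f := (a · A)) ENNReal.summable).symm

end ProbabilityTheory.Kernel

/-- **Doeblin condition ⇒ unique stationary law and uniform geometric TV convergence**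
(the convergence mechanism behind the paper's Theorem 2).  If a Markov kernel `κ` on `Θ`
satisfies `κ θ A ≥ ε · ν A` for all `θ` and all measurable `A`, for some `ε ∈ (0,1]` and
a probability measure `ν`, then `κ` admits a unique invariant probability measure `π`,
and `|κ^{∘n} θ A − π A| ≤ (1 − ε)^n` for every initial point `θ`, every measurable `A`
and every `n ≥ 1`. -/
theorem doeblin_unique_invariant_and_geometric_convergence
    {Θ : Type*} [MeasurableSpace Θ]
    (κ : ProbabilityTheory.Kernel Θ Θ) [IsMarkovKernel κ]
    (ε : ℝ) (hεpos : 0 < ε) (hεle : ε ≤ 1)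
    (ν : Measure Θ) [IsProbabilityMeasure ν]
    (hdoeblin : ∀ (θ : Θ) (A : Set Θ), MeasurableSet A → ENNReal.ofReal ε * ν A ≤ κ θ A) :
    ∃ π : Measure Θ, IsProbabilityMeasure π ∧
      π.bind (fun θ => κ θ) = π ∧
      (∀ π' : Measure Θ, IsProbabilityMeasure π' → π'.bind (fun θ => κ θ) = π' → π' = π) ∧
      (∀ (θ : Θ) (A : Set Θ) (n : ℕ), MeasurableSet A → 1 ≤ n →
        |(kernelIterate κ n θ A).toReal - (π A).toReal| ≤ (1 - ε) ^ n) := by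
  have hmin : ∀ θ, ENNReal.ofReal ε • ν ≤ κ θ := fun θ => Measure.le_iff.2 (hdoeblin θ)
  have he0 : ENNReal.ofReal ε ≠ 0 := (ENNReal.ofReal_pos.2 hεpos).ne'
  have he1 : ENNReal.ofReal ε ≤ 1 := ENNReal.ofReal_le_one.2 hεle
  have hinv := Kernel.comp_regenerationMeasure hmin he0 he1
  have := Kernel.isProbabilityMeasure_regenerationMeasure hmin he0 he1
  refine ⟨Kernel.regenerationMeasure κ (ENNReal.ofReal ε) ν, this, hinv,
    fun π' _ hπ' => Kernel.eq_of_comp_eq_self hmin he0 ENNReal.ofReal_ne_top hπ' hinv,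
    fun θ A n _ _ => ?_⟩
  rw [kernelIterate_apply, ← Function.iterate_fixed (f := (κ ∘ₘ ·)) hinv n]
  exact Kernel.abs_toReal_iterate_comp_sub_le hεpos.le hεle hmin n _ _ A
end
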